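/- Let n ≥ 1, d ≥ 1, p > 0, and let x : Fin n → ℝ × (Fin d → ℝ) be a dataset with first-coordinate projection x₁ and second-coordinate projection x₂. Assume the sample variance of x₁ is positive and the sample covariance matrix S₂ of x₂ is positive definite, and let m₂ be the sample mean of x₂. Then the infimum, over all (m,σ) with σ > 0 and |m| ≥ p·σ and all (μ, Σ) with Σ a positive definite d×d matrix, of h×(x₁‖φ_{m,σ}) + h×(x₂‖g_{μ,Σ}) equals [the infimum over all (m,σ) with σ > 0 and |m| ≥ p·σ of h×(x₁‖φ_{m,σ})] + h×(x₂‖g_{m₂,S₂}). -/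

import Mathlib

open Matrix

/-- Univariate Gaussian density. -/
noncomputable def gaussPdf (m σ t : ℝ) : ℝ :=
  (1 / (σ * Real.sqrt (2 * Real.pi))) * Real.exp (-((t - m) ^ 2) / (2 * σ ^ 2))

/-- Multivariate Gaussian density. -/
noncomputable def mGaussPdf {d : ℕ} (m : Fin d → ℝ) (S : Matrix (Fin d) (Fin d) ℝ)
    (t : Fin d → ℝ) : ℝ :=
  (2 * Real.pi) ^ (-(d : ℝ) / 2) * S.det ^ (-(1 : ℝ) / 2) *
    Real.exp (-(1 / 2) * ((t - m) ⬝ᵥ S⁻¹.mulVec (t - m)))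

section C3LAux

/-- Trace of a Hermitian matrix is the sum of its eigenvalues. -/
lemma c3l_trace_eq_sum_eigs {d : ℕ} {A : Matrix (Fin d) (Fin d) ℝ} (hA : A.IsHermitian) :
    A.trace = ∑ i, hA.eigenvalues i := by
  simpa using hA.trace_eq_sum_eigenvalues

lemma c3l_posDef_conj {d : ℕ} {M B : Matrix (Fin d) (Fin d) ℝ} (hM : M.PosDef)
    (hB : B.IsHermitian) (hdet : IsUnit B.det) : (B * M * B).PosDef := by
  refine Matrix.PosDef.of_dotProduct_mulVec_pos ?_ fun x hx => ?_
  · have : (B * M * B)ᴴ = Bᴴ * Mᴴ * Bᴴ := by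
      rw [conjTranspose_mul, conjTranspose_mul, Matrix.mul_assoc]
    rw [Matrix.IsHermitian, this, hB, hM.1]
  · have hxB : B *ᵥ x ≠ 0 := by
      have hinj : Function.Injective (B.mulVec) :=
        Matrix.mulVec_injective_iff_isUnit.mpr (B.isUnit_iff_isUnit_det.mpr hdet)
      intro h
      exact hx (hinj (by simpa using h))
    have := hM.dotProduct_mulVec_pos hxB
    have hc : B = Bᴴ := hB.symm
    calc (0:ℝ) < dotProduct (star (B *ᵥ x)) (M *ᵥ (B *ᵥ x)) := this
      _ = dotProduct (star x) ((B * M * B) *ᵥ x) := by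
          rw [star_mulVec, dotProduct_mulVec, vecMul_vecMul, ← dotProduct_mulVec, mulVec_mulVec]
          rw [← hc]

lemma c3l_trace_ge_logdet {d : ℕ} {A : Matrix (Fin d) (Fin d) ℝ} (hA : A.PosDef) :
    Real.log A.det + d ≤ A.trace := by
  have hev := hA.eigenvalues_pos
  have hdet : A.det = ∏ i, hA.1.eigenvalues i := by
    simpa using hA.1.det_eq_prod_eigenvalues
  rw [hdet, c3l_trace_eq_sum_eigs hA.1, Real.log_prod (fun i _ => (hev i).ne')]
  have : ∀ i ∈ Finset.univ, Real.log (hA.1.eigenvalues i) + 1 ≤ hA.1.eigenvalues i := by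
    intro i _
    have := Real.log_le_sub_one_of_pos (hev i)
    linarith
  calc (∑ i, Real.log (hA.1.eigenvalues i)) + (d:ℝ)
      = ∑ i, (Real.log (hA.1.eigenvalues i) + 1) := by
        rw [Finset.sum_add_distrib]; simp
    _ ≤ ∑ i, hA.1.eigenvalues i := Finset.sum_le_sum this

open scoped MatrixOrder in
lemma c3l_logdet_ineq {d : ℕ} {S T : Matrix (Fin d) (Fin d) ℝ} (hS : S.PosDef) (hT : T.PosDef) :
    Real.log S.det + d ≤ Real.log T.det + (T⁻¹ * S).trace := by
  set B := CFC.sqrt S with hBdef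
  have hBh : B.IsHermitian := (CFC.sqrt_nonneg S).posSemidef.isHermitian
  have hBB : B * B = S := CFC.sqrt_mul_sqrt_self S hS.posSemidef.nonneg
  have hdetS : 0 < S.det := hS.det_pos
  have hdetT : 0 < T.det := hT.det_pos
  have hdetB2 : B.det * B.det = S.det := by rw [← Matrix.det_mul, hBB]
  have hdetB : IsUnit B.det := by
    refine isUnit_iff_ne_zero.mpr (fun h => ?_)
    rw [h, mul_zero] at hdetB2
    exact hdetS.ne hdetB2
  have hA : (B * T⁻¹ * B).PosDef := c3l_posDef_conj hT.inv hBh hdetB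
  have hAdet : (B * T⁻¹ * B).det = S.det * T.det⁻¹ := by
    rw [Matrix.det_mul, Matrix.det_mul, Matrix.det_nonsing_inv]
    rw [Ring.inverse_eq_inv, mul_comm B.det _, mul_assoc, hdetB2]
    ring
  have hAtr : (B * T⁻¹ * B).trace = (T⁻¹ * S).trace := by
    rw [Matrix.trace_mul_cycle, hBB, Matrix.trace_mul_comm]
  have := c3l_trace_ge_logdet hA
  rw [hAdet, hAtr, Real.log_mul hdetS.ne' (inv_ne_zero hdetT.ne'), Real.log_inv] at this
  linarith

lemma c3l_sum_dotProduct {ι : Type*} {d : ℕ} (s : Finset ι) (f : ι → Fin d → ℝ)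
    (w : Fin d → ℝ) : ∑ i ∈ s, f i ⬝ᵥ w = (∑ i ∈ s, f i) ⬝ᵥ w := by
  simp only [dotProduct, Finset.sum_apply, Finset.sum_mul]
  exact Finset.sum_comm

lemma c3l_dotProduct_sum {ι : Type*} {d : ℕ} (s : Finset ι) (w : Fin d → ℝ)
    (f : ι → Fin d → ℝ) : ∑ i ∈ s, w ⬝ᵥ f i = w ⬝ᵥ (∑ i ∈ s, f i) := by
  simp only [dotProduct, Finset.sum_apply, Finset.mul_sum]
  exact Finset.sum_comm

lemma c3l_mulVec_sum {ι : Type*} {d : ℕ} (s : Finset ι) (M : Matrix (Fin d) (Fin d) ℝ)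
    (f : ι → Fin d → ℝ) : ∑ i ∈ s, M *ᵥ f i = M *ᵥ (∑ i ∈ s, f i) := by
  ext j
  simp only [Finset.sum_apply, Matrix.mulVec, dotProduct, Finset.sum_apply, Finset.mul_sum]
  exact Finset.sum_comm

lemma c3l_trace_mul_vecMulVec {d : ℕ} (M : Matrix (Fin d) (Fin d) ℝ) (v w : Fin d → ℝ) :
    (M * vecMulVec v w).trace = w ⬝ᵥ M *ᵥ v := by
  simp only [Matrix.trace, Matrix.diag, Matrix.mul_apply, vecMulVec_apply, dotProduct,
    Matrix.mulVec, Finset.mul_sum]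
  congr 1; ext i; congr 1; ext j; ring

lemma c3l_sum_quad {n d : ℕ} (hn : (n:ℝ) ≠ 0) (y : Fin n → Fin d → ℝ) (m₂ : Fin d → ℝ)
    (hm₂ : m₂ = (1/(n:ℝ)) • ∑ i, y i)
    (S₂ : Matrix (Fin d) (Fin d) ℝ)
    (hS₂ : S₂ = (1/(n:ℝ)) • ∑ i, vecMulVec (y i - m₂) (y i - m₂))
    (M : Matrix (Fin d) (Fin d) ℝ) (μ : Fin d → ℝ) :
    ∑ i, (y i - μ) ⬝ᵥ M *ᵥ (y i - μ)
      = (n:ℝ) * (M * S₂).trace + (n:ℝ) * ((m₂ - μ) ⬝ᵥ M *ᵥ (m₂ - μ)) := by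
  set z : Fin n → Fin d → ℝ := fun i => y i - m₂ with hzdef
  set c : Fin d → ℝ := m₂ - μ with hcdef
  have hz : ∑ i, z i = 0 := by
    simp only [hzdef, Finset.sum_sub_distrib, Finset.sum_const, Finset.card_univ,
      Fintype.card_fin, hm₂]
    rw [← Nat.cast_smul_eq_nsmul ℝ, smul_smul, mul_one_div, div_self hn, one_smul, sub_self]
  have hsplit : ∀ i, y i - μ = z i + c := fun i => (sub_add_sub_cancel _ _ _).symm
  calc ∑ i, (y i - μ) ⬝ᵥ M *ᵥ (y i - μ)
      = ∑ i, ((z i ⬝ᵥ M *ᵥ z i + z i ⬝ᵥ M *ᵥ c) + (c ⬝ᵥ M *ᵥ z i + c ⬝ᵥ M *ᵥ c)) := by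
        refine Finset.sum_congr rfl fun i _ => ?_
        rw [hsplit i, add_dotProduct, Matrix.mulVec_add, dotProduct_add, dotProduct_add]
    _ = (∑ i, z i ⬝ᵥ M *ᵥ z i) + (∑ i, z i ⬝ᵥ (M *ᵥ c)) + ((∑ i, c ⬝ᵥ M *ᵥ z i)
          + (n:ℝ) * (c ⬝ᵥ M *ᵥ c)) := by
        rw [Finset.sum_add_distrib, Finset.sum_add_distrib, Finset.sum_add_distrib,
          Finset.sum_const, Finset.card_univ, Fintype.card_fin, nsmul_eq_mul]
    _ = (n:ℝ) * (M * S₂).trace + (n:ℝ) * (c ⬝ᵥ M *ᵥ c) := by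
        have h1 : ∑ i, z i ⬝ᵥ (M *ᵥ c) = 0 := by
          rw [c3l_sum_dotProduct, hz, zero_dotProduct]
        have h2 : ∑ i, c ⬝ᵥ M *ᵥ z i = 0 := by
          have : ∑ i, c ⬝ᵥ M *ᵥ z i = c ⬝ᵥ (∑ i, M *ᵥ z i) := c3l_dotProduct_sum _ _ _
          rw [this, c3l_mulVec_sum, hz, Matrix.mulVec_zero, dotProduct_zero]
        have h3 : ∑ i, z i ⬝ᵥ M *ᵥ z i = (n:ℝ) * (M * S₂).trace := by
          have e1 : ∀ i, z i ⬝ᵥ M *ᵥ z i = (M * vecMulVec (z i) (z i)).trace :=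
            fun i => (c3l_trace_mul_vecMulVec M (z i) (z i)).symm
          have e2 : (n:ℝ) • S₂ = ∑ i, vecMulVec (z i) (z i) := by
            rw [hS₂, smul_smul, mul_one_div, div_self hn, one_smul]
          calc ∑ i, z i ⬝ᵥ M *ᵥ z i = ∑ i, (M * vecMulVec (z i) (z i)).trace := by
                exact Finset.sum_congr rfl fun i _ => e1 i
            _ = (M * ((n:ℝ) • S₂)).trace := by
                rw [← Matrix.trace_sum, ← Finset.mul_sum, e2]
            _ = (n:ℝ) * (M * S₂).trace := by
                rw [Matrix.mul_smul, Matrix.trace_smul, smul_eq_mul]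
        rw [h1, h2, h3]
        ring

lemma c3l_log_mGaussPdf {d : ℕ} {T : Matrix (Fin d) (Fin d) ℝ} (hT : 0 < T.det)
    (μ t : Fin d → ℝ) :
    Real.log (mGaussPdf μ T t) = (-(d:ℝ)/2) * Real.log (2*Real.pi)
      + (-(1:ℝ)/2) * Real.log T.det + (-(1/2)) * ((t-μ) ⬝ᵥ T⁻¹ *ᵥ (t-μ)) := by
  have h2pi : (0:ℝ) < 2 * Real.pi := by positivity
  unfold mGaussPdf
  rw [Real.log_mul (by positivity) (Real.exp_ne_zero _),
    Real.log_mul (by positivity) (by positivity),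
    Real.log_rpow h2pi, Real.log_rpow hT, Real.log_exp]

lemma c3l_log_gaussPdf {σ : ℝ} (hσ : 0 < σ) (m t : ℝ) :
    Real.log (gaussPdf m σ t) = -(Real.log σ + Real.log (Real.sqrt (2*Real.pi)))
      - (t-m)^2 / (2*σ^2) := by
  have hs : (0:ℝ) < Real.sqrt (2*Real.pi) := Real.sqrt_pos.mpr (by positivity)
  unfold gaussPdf
  rw [Real.log_mul (by positivity) (Real.exp_ne_zero _), Real.log_exp, one_div,
    Real.log_inv, Real.log_mul hσ.ne' hs.ne']
  ring

lemma c3l_mcost_eq {n d : ℕ} (hn : (n:ℝ) ≠ 0) (y : Fin n → Fin d → ℝ) (m₂ : Fin d → ℝ)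
    (hm₂ : m₂ = (1/(n:ℝ)) • ∑ i, y i)
    (S₂ : Matrix (Fin d) (Fin d) ℝ)
    (hS₂ : S₂ = (1/(n:ℝ)) • ∑ i, vecMulVec (y i - m₂) (y i - m₂))
    {T : Matrix (Fin d) (Fin d) ℝ} (hT : T.PosDef) (μ : Fin d → ℝ) :
    -(1/(n:ℝ)) * ∑ i, Real.log (mGaussPdf μ T (y i))
      = (d:ℝ)/2 * Real.log (2*Real.pi) + 1/2 * Real.log T.det
        + 1/2 * (T⁻¹ * S₂).trace + 1/2 * ((m₂-μ) ⬝ᵥ T⁻¹ *ᵥ (m₂-μ)) := by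
  have hlog : ∀ i : Fin n, Real.log (mGaussPdf μ T (y i))
      = (-(d:ℝ)/2) * Real.log (2*Real.pi) + (-(1:ℝ)/2) * Real.log T.det
        + (-(1/2)) * ((y i - μ) ⬝ᵥ T⁻¹ *ᵥ (y i - μ)) :=
    fun i => c3l_log_mGaussPdf hT.det_pos μ (y i)
  rw [Finset.sum_congr rfl (fun i _ => hlog i)]
  rw [Finset.sum_add_distrib, Finset.sum_const, Finset.card_univ, Fintype.card_fin,
    nsmul_eq_mul, ← Finset.mul_sum, c3l_sum_quad hn y m₂ hm₂ S₂ hS₂ T⁻¹ μ]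
  field_simp
  ring

lemma c3l_mcost_min {n d : ℕ} (hn : (n:ℝ) ≠ 0) (y : Fin n → Fin d → ℝ) (m₂ : Fin d → ℝ)
    (hm₂ : m₂ = (1/(n:ℝ)) • ∑ i, y i)
    (S₂ : Matrix (Fin d) (Fin d) ℝ)
    (hS₂ : S₂ = (1/(n:ℝ)) • ∑ i, vecMulVec (y i - m₂) (y i - m₂))
    (hpos : S₂.PosDef)
    {T : Matrix (Fin d) (Fin d) ℝ} (hT : T.PosDef) (μ : Fin d → ℝ) :
    -(1/(n:ℝ)) * ∑ i, Real.log (mGaussPdf m₂ S₂ (y i))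
      ≤ -(1/(n:ℝ)) * ∑ i, Real.log (mGaussPdf μ T (y i)) := by
  rw [c3l_mcost_eq hn y m₂ hm₂ S₂ hS₂ hpos m₂, c3l_mcost_eq hn y m₂ hm₂ S₂ hS₂ hT μ]
  have h1 : (S₂⁻¹ * S₂).trace = (d:ℝ) := by
    rw [Matrix.nonsing_inv_mul _ (isUnit_iff_ne_zero.mpr hpos.det_pos.ne'), Matrix.trace_one]
    simp
  have h2 : (m₂ - m₂) ⬝ᵥ S₂⁻¹ *ᵥ (m₂ - m₂) = 0 := by
    simp
  have h3 : 0 ≤ (m₂ - μ) ⬝ᵥ T⁻¹ *ᵥ (m₂ - μ) := by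
    have := hT.inv.posSemidef.dotProduct_mulVec_nonneg (m₂ - μ)
    simpa using this
  have h4 := c3l_logdet_ineq hpos hT
  rw [h1, h2]
  linarith

lemma c3l_ucost_lb {n : ℕ} (hn : 0 < n) (t : Fin n → ℝ)
    (hv : 0 < (1/(n:ℝ)) * ∑ i, (t i - (1/(n:ℝ)) * ∑ j, t j)^2)
    {σ : ℝ} (hσ : 0 < σ) (m : ℝ) :
    (1/2) * (Real.log ((1/(n:ℝ)) * ∑ i, (t i - (1/(n:ℝ)) * ∑ j, t j)^2) + 1)
        + Real.log (Real.sqrt (2*Real.pi))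
      ≤ -(1/(n:ℝ)) * ∑ i, Real.log (gaussPdf m σ (t i)) := by
  have hnR : (0:ℝ) < n := by exact_mod_cast hn
  set m' : ℝ := (1/(n:ℝ)) * ∑ j, t j with hm'
  set v : ℝ := (1/(n:ℝ)) * ∑ i, (t i - m')^2 with hvdef
  have hsum : ∑ j, t j = (n:ℝ) * m' := by
    rw [hm']; field_simp
  have hzero : ∑ i, (t i - m') = 0 := by
    rw [Finset.sum_sub_distrib, Finset.sum_const, Finset.card_univ, Fintype.card_fin,
      nsmul_eq_mul, hsum, sub_self]
  have hkey : ∑ i, (t i - m)^2 = (n:ℝ) * v + (n:ℝ) * (m' - m)^2 := by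
    have expand : ∀ i : Fin n, (t i - m)^2
        = (t i - m')^2 + 2*(m'-m)*(t i - m') + (m'-m)^2 := by intro i; ring
    rw [Finset.sum_congr rfl (fun i _ => expand i), Finset.sum_add_distrib,
      Finset.sum_add_distrib, Finset.sum_const, Finset.card_univ, Fintype.card_fin,
      nsmul_eq_mul, ← Finset.mul_sum, hzero, hvdef]
    field_simp
    ring
  have hcost : -(1/(n:ℝ)) * ∑ i, Real.log (gaussPdf m σ (t i))
      = Real.log σ + Real.log (Real.sqrt (2*Real.pi))
        + (∑ i, (t i - m)^2) / ((n:ℝ) * (2*σ^2)) := by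
    rw [Finset.sum_congr rfl (fun i _ => c3l_log_gaussPdf hσ m (t i))]
    rw [Finset.sum_sub_distrib, Finset.sum_const, Finset.card_univ, Fintype.card_fin,
      nsmul_eq_mul, ← Finset.sum_div]
    field_simp
    ring
  rw [hcost, hkey]
  have hq : v / (2*σ^2) + 0 ≤ ((n:ℝ) * v + (n:ℝ) * (m'-m)^2) / ((n:ℝ) * (2*σ^2)) := by
    rw [add_div]
    have e1 : (n:ℝ) * v / ((n:ℝ) * (2*σ^2)) = v / (2*σ^2) := by
      rw [mul_div_mul_left _ _ hnR.ne']
    rw [e1]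
    gcongr
    positivity
  have hlog : (1/2) * (Real.log v + 1) ≤ Real.log σ + v / (2*σ^2) := by
    have hσ2 : (0:ℝ) < σ^2 := by positivity
    have h := Real.log_le_sub_one_of_pos (show (0:ℝ) < v / σ^2 by positivity)
    rw [Real.log_div hv.ne' hσ2.ne'] at h
    have hlogσ2 : Real.log (σ^2) = 2 * Real.log σ := by
      rw [Real.log_pow]; norm_num
    rw [hlogσ2] at h
    have hvσ : v / (2*σ^2) = (v/σ^2)/2 := by ring
    rw [hvσ]
    linarith
  linarith

end C3LAux

/-- C3L one-cluster cost decomposition: the constrained infimum of the total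
cross-entropy over product Gaussian densities equals the constrained
one-dimensional infimum plus the unconstrained (MLE) cross-entropy of the
remaining coordinates. -/
theorem c3l_one_cluster_cost_decomposition
    (n d : ℕ) (hn : 1 ≤ n) (hd : 1 ≤ d) (p : ℝ) (hp : 0 < p)
    (x : Fin n → ℝ × (Fin d → ℝ))
    (hvar : 0 < (1 / (n : ℝ)) * ∑ i, ((x i).1 - (1 / (n : ℝ)) * ∑ j, (x j).1) ^ 2)
    (m₂ : Fin d → ℝ) (hm₂ : m₂ = (1 / (n : ℝ)) • ∑ i, (x i).2)
    (S₂ : Matrix (Fin d) (Fin d) ℝ)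
    (hS₂ : S₂ = (1 / (n : ℝ)) • ∑ i, Matrix.vecMulVec ((x i).2 - m₂) ((x i).2 - m₂))
    (hpos : S₂.PosDef) :
    sInf {c : ℝ | ∃ m σ : ℝ, 0 < σ ∧ p * σ ≤ |m| ∧
        ∃ (μ : Fin d → ℝ) (Sig : Matrix (Fin d) (Fin d) ℝ), Sig.PosDef ∧
          c = -(1 / (n : ℝ)) * ∑ i, Real.log (gaussPdf m σ (x i).1)
              + -(1 / (n : ℝ)) * ∑ i, Real.log (mGaussPdf μ Sig (x i).2)} =
      sInf {c : ℝ | ∃ m σ : ℝ, 0 < σ ∧ p * σ ≤ |m| ∧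
          c = -(1 / (n : ℝ)) * ∑ i, Real.log (gaussPdf m σ (x i).1)}
        + -(1 / (n : ℝ)) * ∑ i, Real.log (mGaussPdf m₂ S₂ (x i).2) := by
  have hn0 : 0 < n := hn
  have hnR : ((n:ℝ)) ≠ 0 := by positivity
  set b₀ : ℝ := -(1 / (n : ℝ)) * ∑ i, Real.log (mGaussPdf m₂ S₂ (x i).2) with hb₀
  set A : Set ℝ := {c : ℝ | ∃ m σ : ℝ, 0 < σ ∧ p * σ ≤ |m| ∧
      c = -(1 / (n : ℝ)) * ∑ i, Real.log (gaussPdf m σ (x i).1)} with hA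
  set L : Set ℝ := {c : ℝ | ∃ m σ : ℝ, 0 < σ ∧ p * σ ≤ |m| ∧
      ∃ (μ : Fin d → ℝ) (Sig : Matrix (Fin d) (Fin d) ℝ), Sig.PosDef ∧
        c = -(1 / (n : ℝ)) * ∑ i, Real.log (gaussPdf m σ (x i).1)
            + -(1 / (n : ℝ)) * ∑ i, Real.log (mGaussPdf μ Sig (x i).2)} with hL
  set L₀ : ℝ := (1/2) * (Real.log ((1/(n:ℝ)) * ∑ i, ((x i).1 - (1/(n:ℝ)) * ∑ j, (x j).1)^2) + 1)
      + Real.log (Real.sqrt (2*Real.pi)) with hL₀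
  -- lower bound for elements of A
  have hAlb : ∀ a ∈ A, L₀ ≤ a := by
    rintro a ⟨m, σ, hσ, _, rfl⟩
    exact c3l_ucost_lb hn0 (fun i => (x i).1) hvar hσ m
  -- b₀ is the minimum of the multivariate cost
  have hble : ∀ (μ : Fin d → ℝ) (T : Matrix (Fin d) (Fin d) ℝ), T.PosDef →
      b₀ ≤ -(1 / (n : ℝ)) * ∑ i, Real.log (mGaussPdf μ T (x i).2) := by
    intro μ T hT
    exact c3l_mcost_min hnR (fun i => (x i).2) m₂ hm₂ S₂ hS₂ hpos hT μ
  have hp1 : p * 1 ≤ |p| := by rw [abs_of_pos hp]; linarith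
  have hAne : A.Nonempty :=
    ⟨-(1 / (n : ℝ)) * ∑ i, Real.log (gaussPdf p 1 (x i).1), p, 1, one_pos, hp1, rfl⟩
  have hLne : L.Nonempty :=
    ⟨-(1 / (n : ℝ)) * ∑ i, Real.log (gaussPdf p 1 (x i).1) + b₀,
      p, 1, one_pos, hp1, m₂, S₂, hpos, rfl⟩
  have hbddA : BddBelow A := ⟨L₀, fun a ha => hAlb a ha⟩
  have hbddL : BddBelow L := by
    refine ⟨L₀ + b₀, ?_⟩
    rintro c ⟨m, σ, hσ, hmσ, μ, T, hT, rfl⟩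
    have h1 := hAlb _ ⟨m, σ, hσ, hmσ, rfl⟩
    have h2 := hble μ T hT
    exact add_le_add h1 h2
  apply le_antisymm
  · -- sInf L ≤ sInf A + b₀
    have key : sInf L - b₀ ≤ sInf A := by
      refine le_csInf hAne ?_
      rintro a ⟨m, σ, hσ, hmσ, rfl⟩
      have hmem : -(1 / (n : ℝ)) * ∑ i, Real.log (gaussPdf m σ (x i).1) + b₀ ∈ L :=
        ⟨m, σ, hσ, hmσ, m₂, S₂, hpos, rfl⟩
      have := csInf_le hbddL hmem
      linarith
    linarith
  · -- sInf A + b₀ ≤ sInf L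
    refine le_csInf hLne ?_
    rintro c ⟨m, σ, hσ, hmσ, μ, T, hT, rfl⟩
    have h1 : sInf A ≤ -(1 / (n : ℝ)) * ∑ i, Real.log (gaussPdf m σ (x i).1) :=
      csInf_le hbddA ⟨m, σ, hσ, hmσ, rfl⟩
    have h2 := hble μ T hT
    exact add_le_add h1 h2
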